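/- Let (T, T^p, 𝒮) be a (-d)-Calabi–Yau triple with 𝒮 = add(S). Then Hom_{T/T^p}(Σ^j S, S) = 0 for all integers j with 1 ≤ j ≤ d. -/

import Mathlib

open CategoryTheory Category Limits Pretriangulated
open scoped Classical

universe v u

variable (k : Type) [Field k]
variable (T : Type u) [Category.{v} T] [Preadditive T] [Linear k T] [HasZeroObject T]
  [HasShift T ℤ] [∀ n : ℤ, (shiftFunctor T n).Additive] [Pretriangulated T]
  [HasFiniteBiproducts T]

/-- `T_{>i} = ⊥(Σ^{>-i-1}𝒮)`. -/
def Tgt (𝒮 : Set T) (i : ℤ) : Set T :=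
  {X | ∀ (j : ℤ), j > -i - 1 → ∀ s ∈ 𝒮, ∀ f : X ⟶ s⟦j⟧, f = 0}

/-- `T_{≤i} = ⊥(Σ^{<-i}𝒮)`. -/
def Tle (𝒮 : Set T) (i : ℤ) : Set T :=
  {X | ∀ (j : ℤ), j < -i → ∀ s ∈ 𝒮, ∀ f : X ⟶ s⟦j⟧, f = 0}

/-- `(Σ^{≥0}𝒮)^⊥`. -/
def perpGE (𝒮 : Set T) : Set T :=
  {X | ∀ (j : ℤ), 0 ≤ j → ∀ s ∈ 𝒮, ∀ f : s⟦j⟧ ⟶ X, f = 0}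

/-- `(Σ^{<0}𝒮)^⊥`. -/
def perpLT (𝒮 : Set T) : Set T :=
  {X | ∀ (j : ℤ), j < 0 → ∀ s ∈ 𝒮, ∀ f : s⟦j⟧ ⟶ X, f = 0}

/-- A torsion pair `(𝒳, 𝒴)` on a triangulated category. -/
structure IsTorsionPair (𝒳 𝒴 : Set T) : Prop where
  orth : ∀ X ∈ 𝒳, ∀ Y ∈ 𝒴, ∀ f : X ⟶ Y, f = 0
  tri : ∀ A : T, ∃ (X Y : T) (_ : X ∈ 𝒳) (_ : Y ∈ 𝒴)
    (f : X ⟶ A) (g : A ⟶ Y) (h : Y ⟶ X⟦(1 : ℤ)⟧),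
    Triangle.mk f g h ∈ distTriang T

namespace Triangulated

/-- A triangulated subcategory (as in Mathlib of December 2024). -/
structure Subcategory where
  P : T → Prop
  zero' : ∃ (Z : T) (_ : IsZero Z), P Z
  shift (X : T) (n : ℤ) : P X → P (X⟦n⟧)
  ext₂' (Tr : Triangle T) (_ : Tr ∈ distTriang T) : P Tr.obj₁ → P Tr.obj₃ →
    ObjectProperty.isoClosure P Tr.obj₂

variable {T} in
/-- The class of morphisms whose cone is in `S.P`. -/
def Subcategory.W (S : Subcategory T) : MorphismProperty T := fun X Y f =>
  ∃ (Z : T) (g : Y ⟶ Z) (h : Z ⟶ X⟦(1 : ℤ)⟧) (_ : Triangle.mk f g h ∈ distTriang T), S.P Z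

end Triangulated

/-- A triangulated subcategory is thick if it is closed under retracts (direct summands). -/
def IsThick (Q : Triangulated.Subcategory T) : Prop :=
  ∀ X Y : T, (∃ (r : X ⟶ Y) (s : Y ⟶ X), s ≫ r = 𝟙 Y) → Q.P X → Q.P Y

/-- A `(-d)`-Calabi–Yau triple `(T, T^p, 𝒮)` with `𝒮 = add S`: `T` is a `k`-linear,
Hom-finite, Krull–Schmidt (idempotent complete) triangulated category, `T^p` a thick
subcategory with a bifunctorial Serre duality `D Hom(X, Y) ≅ Hom(Y, Σ^{-d} X)` for
`X ∈ T^p`, and `S` the additive generator of a simple minded collection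
`𝒮 = {S₁, …, Sₘ}` inducing the two co-t-structures of (RS2), with
`⊥(Σ^{≥0}𝒮) ⊆ T^p` and `(Σ^{<0}𝒮)^⊥ ⊆ T^p`. -/
structure CYTriple (d : ℕ) where
  homFin : ∀ X Y : T, FiniteDimensional k (X ⟶ Y)
  idem : IsIdempotentComplete T
  P : Triangulated.Subcategory T
  thick : IsThick T P
  serre : ∀ (X Y : T), P.P X → (((X ⟶ Y) →ₗ[k] k) ≃ₗ[k] (Y ⟶ X⟦(-(d : ℤ))⟧))
  serre_natY : ∀ (X Y Y' : T) (hX : P.P X) (g : Y ⟶ Y') (φ : (X ⟶ Y') →ₗ[k] k),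
    serre X Y hX (φ.comp (Linear.rightComp k X g)) = g ≫ serre X Y' hX φ
  serre_natX : ∀ (X X' Y : T) (hX : P.P X) (hX' : P.P X') (u : X ⟶ X')
    (φ : (X ⟶ Y) →ₗ[k] k),
    serre X' Y hX' (φ.comp (Linear.leftComp k Y u)) =
      serre X Y hX φ ≫ (shiftFunctor T (-(d : ℤ))).map u
  S : T
  m : ℕ
  Si : Fin m → T
  decomp : S ≅ ⨁ Si
  indec : ∀ i, ¬ IsZero (Si i) ∧ ∀ (A B : T), (Si i ≅ A ⊞ B) → IsZero A ∨ IsZero B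
  smc_orth : ∀ (j : ℤ), j < 0 → ∀ f : S ⟶ S⟦j⟧, f = 0
  smc_dim : ∀ i j, Module.finrank k (Si i ⟶ Si j) = if i = j then 1 else 0
  smc_gen : ∀ Q : Triangulated.Subcategory T, IsThick T Q → Q.P S → ∀ X, Q.P X
  cot1 : IsTorsionPair T (Tgt T {S} 0) (Tle T {S} 0)
  cot2 : IsTorsionPair T (perpGE T {S}) (perpLT T {S})
  incl1 : Tgt T {S} 0 ⊆ P.P
  incl2 : perpLT T {S} ⊆ P.P

/-! A morphism `Σʲ S → S` in `T/T^p` is a left fraction `s⁻¹ f` whose denominator `s : S → Y`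
is a composite of morphisms with cone in `T^p`; in a pretriangulated category these admit a left
calculus of fractions. Prolong `s` to `S → Z`, with `Z` an iterated cone of morphisms `B → -`,
`B ∈ T^p ∩ T_{≤0}`: at each step split the desuspended cone `A → Σ⁻¹N → B` by the co-t-structure
and note that `T_{>0}` has no nonzero morphisms into such iterated cones. Now `Hom(Σʲ S, S) = 0`
as `j ≥ 1`, and Serre duality gives `Hom(Σʲ S, ΣB) ≅ D Hom(Σ^{d+1} B, Σʲ S) = 0` as `j ≤ d`, so
`Hom(Σʲ S, Z) = 0`: the numerator `f` dies after composing with the prolongation. -/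

section Shift

variable {C : Type*} [Category C] [Preadditive C]

lemma hom_eq_zero_of_iso {X X' Y Y' : C} (e₁ : X ≅ X') (e₂ : Y ≅ Y')
    (h : ∀ g : X ⟶ Y, g = 0) (f : X' ⟶ Y') : f = 0 := by
  simpa using congrArg (fun g => e₁.inv ≫ g ≫ e₂.hom) (h (e₁.hom ≫ f ≫ e₂.inv))

variable [HasShift C ℤ]

lemma Tle_mono {𝒮 : Set C} {i i' : ℤ} (h : i ≤ i') : Tle C 𝒮 i ⊆ Tle C 𝒮 i' :=
  fun _ hX j hj => hX j (by omega)

variable [∀ n : ℤ, (shiftFunctor C n).Additive]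

lemma shift_hom_shift_eq_zero {X Y : C} {n m : ℤ} (h : ∀ g : X ⟶ Y⟦m - n⟧, g = 0)
    (f : X⟦n⟧ ⟶ Y⟦m⟧) : f = 0 :=
  (shiftFunctor C (-n)).map_injective <| by
    rw [Functor.map_zero]
    exact hom_eq_zero_of_iso ((shiftFunctorCompIsoId C n (-n) (add_neg_cancel n)).app X).symm
      ((shiftFunctorAdd' C m (-n) (m - n) (sub_eq_add_neg m n)).app Y) h _

lemma shift_mem_Tle {𝒮 : Set C} {i : ℤ} {X : C}
    (hX : X ∈ Tle C 𝒮 i) (n : ℤ) : X⟦n⟧ ∈ Tle C 𝒮 (i - n) :=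
  fun j hj s hs => shift_hom_shift_eq_zero (hX (j - n) (by omega) s hs)

end Shift

namespace CategoryTheory.MorphismProperty

variable {C D : Type*} [Category C] [Category D] {W : MorphismProperty C}

lemma IsInvertedBy.multiplicativeClosure {L : C ⥤ D} (hL : W.IsInvertedBy L) :
    W.multiplicativeClosure.IsInvertedBy L :=
  (W.multiplicativeClosure_le_iff ((isomorphisms D).inverseImage L)).mpr hL

lemma _root_.CategoryTheory.Functor.IsLocalization.multiplicativeClosure (L : C ⥤ D)
    [L.IsLocalization W] : L.IsLocalization W.multiplicativeClosure :=
  Functor.IsLocalization.of_equivalence_source L W L _ (Equivalence.refl)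
    (fun _ _ _ hf => le_isoClosure _ _ (le_multiplicativeClosure W _ hf))
    (Localization.inverts L W).multiplicativeClosure L.leftUnitor

lemma multiplicativeClosure_exists_comm_sq
    (hW : ∀ ⦃X Y X' : C⦄ (s : X ⟶ Y), W s → ∀ f : X ⟶ X',
      ∃ (Y' : C) (f' : Y ⟶ Y') (s' : X' ⟶ Y'), W s' ∧ s ≫ f' = f ≫ s')
    {X Y X' : C} {s : X ⟶ Y} (hs : W.multiplicativeClosure s) (f : X ⟶ X') :
    ∃ (Y' : C) (f' : Y ⟶ Y') (s' : X' ⟶ Y'), W.multiplicativeClosure s' ∧ s ≫ f' = f ≫ s' := by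
  induction hs generalizing X' with
  | of s hs =>
    obtain ⟨Y', f', s', hs', hfac⟩ := hW s hs f
    exact ⟨Y', f', s', .of _ hs', hfac⟩
  | id X => exact ⟨X', f, 𝟙 X', .id X', by simp⟩
  | comp_of s₁ s₂ _ hs₂ ih =>
    obtain ⟨Y₁, f₁, s₁', hs₁', hfac₁⟩ := ih f
    obtain ⟨Y₂, f₂, s₂', hs₂', hfac₂⟩ := hW s₂ hs₂ f₁
    exact ⟨Y₂, f₂, s₁' ≫ s₂', .comp_of _ _ hs₁' hs₂', by simp [hfac₂, reassoc_of% hfac₁]⟩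

lemma multiplicativeClosure_exists_comp_eq_comp
    (hW : ∀ ⦃X' X Y : C⦄ (s : X' ⟶ X), W s → ∀ f₁ f₂ : X ⟶ Y, s ≫ f₁ = s ≫ f₂ →
      ∃ (Y' : C) (t : Y ⟶ Y'), W t ∧ f₁ ≫ t = f₂ ≫ t)
    {X' X Y : C} {s : X' ⟶ X} (hs : W.multiplicativeClosure s) (f₁ f₂ : X ⟶ Y)
    (hf : s ≫ f₁ = s ≫ f₂) :
    ∃ (Y' : C) (t : Y ⟶ Y'), W.multiplicativeClosure t ∧ f₁ ≫ t = f₂ ≫ t := by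
  induction hs generalizing Y with
  | of s hs =>
    obtain ⟨Y', t, ht, hft⟩ := hW s hs f₁ f₂ hf
    exact ⟨Y', t, .of _ ht, hft⟩
  | id X => exact ⟨Y, 𝟙 Y, .id Y, by simpa using hf⟩
  | comp_of s₁ s₂ _ hs₂ ih =>
    obtain ⟨Y₁, t₁, ht₁, hft₁⟩ := ih (s₂ ≫ f₁) (s₂ ≫ f₂) (by simpa using hf)
    obtain ⟨Y₂, t₂, ht₂, hft₂⟩ := hW s₂ hs₂ (f₁ ≫ t₁) (f₂ ≫ t₁) (by simpa using hft₁)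
    exact ⟨Y₂, t₁ ≫ t₂, .comp_of _ _ ht₁ ht₂, by simpa using hft₂⟩

lemma LeftFraction.map_eq_zero [HasZeroMorphisms C] [HasZeroMorphisms D] {X Y : C}
    (φ : W.LeftFraction X Y) (L : C ⥤ D) [L.PreservesZeroMorphisms] (hL : W.IsInvertedBy L)
    {Z : C} (w : φ.Y' ⟶ Z) (hsw : W (φ.s ≫ w)) (hfw : φ.f ≫ w = 0) : φ.map L hL = 0 := by
  have : IsIso (L.map φ.s) := hL _ φ.hs
  have : IsIso (L.map φ.s ≫ L.map w) := L.map_comp φ.s w ▸ hL _ hsw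
  have : IsIso (L.map w) := IsIso.of_isIso_comp_left (L.map φ.s) (L.map w)
  rw [← cancel_mono (L.map φ.s), LeftFraction.map_comp_map_s, zero_comp,
    ← cancel_mono (L.map w), ← L.map_comp, hfw, L.map_zero, zero_comp]

end CategoryTheory.MorphismProperty

section Pretriangulated

variable {C : Type*} [Category C] [Preadditive C] [HasZeroObject C] [HasShift C ℤ]
  [∀ n : ℤ, (shiftFunctor C n).Additive] [Pretriangulated C]

lemma IsThick.isClosedUnderIsomorphisms {P : Triangulated.Subcategory C} (hP : IsThick C P) :
    ObjectProperty.IsClosedUnderIsomorphisms P.P :=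
  ⟨fun e hX => hP _ _ ⟨e.hom, e.inv, e.inv_hom_id⟩ hX⟩

namespace Triangulated.Subcategory

variable (P : Subcategory C)

lemma ext₃ [ObjectProperty.IsClosedUnderIsomorphisms P.P] (Tr : Triangle C)
    (hTr : Tr ∈ distTriang C) (h₁ : P.P Tr.obj₁) (h₂ : P.P Tr.obj₂) : P.P Tr.obj₃ := by
  obtain ⟨Y, hY, ⟨e⟩⟩ := P.ext₂' _ (rot_of_distTriang _ hTr) h₂ (P.shift _ 1 h₁)
  exact ObjectProperty.prop_of_iso P.P e.symm hY

variable {P}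

lemma W.exists_comm_sq {X Y X' : C} {s : X ⟶ Y} (hs : P.W s) (f : X ⟶ X') :
    ∃ (Y' : C) (f' : Y ⟶ Y') (s' : X' ⟶ Y'), P.W s' ∧ s ≫ f' = f ≫ s' := by
  obtain ⟨N, g, h, hT, hN⟩ := hs
  obtain ⟨Y', s', g', hT'⟩ := distinguished_cocone_triangle₂ (h ≫ f⟦(1 : ℤ)⟧')
  obtain ⟨f', hf', -⟩ := complete_distinguished_triangle_morphism₂ _ _ hT hT' f (𝟙 N)
    (id_comp _).symm
  exact ⟨Y', f', s', ⟨_, _, _, hT', hN⟩, hf'⟩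

lemma W.exists_comp_eq_comp {X' X Y : C} {s : X' ⟶ X} (hs : P.W s) {f₁ f₂ : X ⟶ Y}
    (hf : s ≫ f₁ = s ≫ f₂) : ∃ (Y' : C) (t : Y ⟶ Y'), P.W t ∧ f₁ ≫ t = f₂ ≫ t := by
  obtain ⟨N, g, h, hT, hN⟩ := hs
  obtain ⟨q, hq⟩ : ∃ q : N ⟶ Y, f₁ - f₂ = g ≫ q := Triangle.yoneda_exact₂ _ hT _
    (show s ≫ (f₁ - f₂) = 0 by rw [Preadditive.comp_sub, hf, sub_self])
  obtain ⟨Y', t, r, hT'⟩ := distinguished_cocone_triangle q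
  refine ⟨Y', t, ⟨_, _, _, rot_of_distTriang _ hT', P.shift N 1 hN⟩, ?_⟩
  have hqt : q ≫ t = 0 := comp_distTriang_mor_zero₁₂ _ hT'
  rw [← sub_eq_zero, ← Preadditive.sub_comp, hq, assoc, hqt, comp_zero]

instance hasLeftCalculusOfFractions_multiplicativeClosure_W (P : Subcategory C) :
    P.W.multiplicativeClosure.HasLeftCalculusOfFractions where
  exists_leftFraction _ _ φ := by
    obtain ⟨Y', f', s', hs', hfac⟩ :=
      MorphismProperty.multiplicativeClosure_exists_comm_sq (fun _ _ _ _ hs => hs.exists_comm_sq)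
        φ.hs φ.f
    exact ⟨⟨f', s', hs'⟩, hfac.symm⟩
  ext _ _ _ f₁ f₂ _ hs hf := by
    obtain ⟨Y', t, ht, hft⟩ := MorphismProperty.multiplicativeClosure_exists_comp_eq_comp
      (fun _ _ _ _ hs _ _ hf => hs.exists_comp_eq_comp hf) hs f₁ f₂ hf
    exact ⟨Y', t, ht, hft⟩

end Triangulated.Subcategory

inductive IsIteratedCone (𝒞 : Set C) (S : C) : C → Prop
  | base : IsIteratedCone 𝒞 S S
  | cone {B M Z : C} (hM : IsIteratedCone 𝒞 S M) (hB : B ∈ 𝒞) (u : B ⟶ M) (v : M ⟶ Z)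
      (w : Z ⟶ B⟦(1 : ℤ)⟧) (h : Triangle.mk u v w ∈ distTriang C) : IsIteratedCone 𝒞 S Z

lemma IsIteratedCone.hom_eq_zero {𝒞 : Set C} {S X Z : C} (hZ : IsIteratedCone 𝒞 S Z)
    (hS : ∀ f : X ⟶ S, f = 0) (h𝒞 : ∀ B ∈ 𝒞, ∀ f : X ⟶ B⟦(1 : ℤ)⟧, f = 0) (f : X ⟶ Z) :
    f = 0 := by
  induction hZ with
  | base => exact hS f
  | cone _ hB u v w h ih =>
    obtain ⟨g, rfl⟩ := Triangle.coyoneda_exact₃ _ h f (h𝒞 _ hB _)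
    rw [ih g]
    exact zero_comp

end Pretriangulated

namespace CYTriple

variable {k T} {d : ℕ} (E : CYTriple k T d)

def perfectLe : Set T := {B | E.P.P B ∧ B ∈ Tle T {E.S} 0}

lemma S_mem_Tle : E.S ∈ Tle T {E.S} 0 := by
  rintro j hj _ rfl
  exact E.smc_orth j (by omega)

lemma hom_shift_S_eq_zero {j : ℤ} (hj : 1 ≤ j) (f : E.S⟦j⟧ ⟶ E.S) : f = 0 :=
  hom_eq_zero_of_iso (Iso.refl _) ((shiftFunctorZero T ℤ).app E.S)
    (shift_mem_Tle E.S_mem_Tle j 0 (by omega) E.S rfl) f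

lemma hom_S_eq_zero_of_mem_Tgt {A : T} (hA : A ∈ Tgt T {E.S} 0) (f : A ⟶ E.S) : f = 0 :=
  hom_eq_zero_of_iso (Iso.refl _) ((shiftFunctorZero T ℤ).app E.S) (hA 0 (by omega) E.S rfl) f

lemma hom_shift_eq_zero_of_hom_eq_zero {X Y : T} (hX : E.P.P X) (h : ∀ f : X ⟶ Y, f = 0)
    (g : Y ⟶ X⟦-(d : ℤ)⟧) : g = 0 := by
  have : (E.serre X Y hX).symm g = 0 := LinearMap.ext fun f => by rw [h f, map_zero]; rfl
  exact (E.serre X Y hX).symm.map_eq_zero_iff.mp this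

lemma hom_shift_S_eq_zero_of_mem_perfectLe {j : ℤ} (hj : j ≤ d) {B : T}
    (hB : B ∈ E.perfectLe) (f : E.S⟦j⟧ ⟶ B⟦(1 : ℤ)⟧) : f = 0 :=
  hom_eq_zero_of_iso (Iso.refl _)
    ((shiftFunctorCompIsoId T (d : ℤ) (-(d : ℤ)) (add_neg_cancel _)).app (B⟦(1 : ℤ)⟧))
    (E.hom_shift_eq_zero_of_hom_eq_zero (E.P.shift _ _ (E.P.shift _ _ hB.1))
      (shift_mem_Tle (shift_mem_Tle hB.2 1) d j (by omega) E.S rfl)) f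

lemma hom_eq_zero_of_mem_Tgt_of_isIteratedCone {A M : T} (hA : A ∈ Tgt T {E.S} 0)
    (hM : IsIteratedCone E.perfectLe E.S M) (f : A ⟶ M) : f = 0 :=
  hM.hom_eq_zero (E.hom_S_eq_zero_of_mem_Tgt hA)
    (fun _ hB => E.cot1.orth A hA _ (Tle_mono (by omega) (shift_mem_Tle hB.2 1))) f

lemma hom_shift_S_eq_zero_of_isIteratedCone {j : ℤ} (h1 : 1 ≤ j) (h2 : j ≤ d) {M : T}
    (hM : IsIteratedCone E.perfectLe E.S M) (f : E.S⟦j⟧ ⟶ M) : f = 0 :=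
  hM.hom_eq_zero (E.hom_shift_S_eq_zero h1)
    (fun _ hB => E.hom_shift_S_eq_zero_of_mem_perfectLe h2 hB) f

lemma exists_isIteratedCone_of_W {M Y : T} (hM : IsIteratedCone E.perfectLe E.S M)
    {s : M ⟶ Y} (hs : E.P.W s) :
    ∃ (Z : T) (w : Y ⟶ Z), IsIteratedCone E.perfectLe E.S Z ∧ E.P.W (s ≫ w) := by
  have := E.thick.isClosedUnderIsomorphisms
  obtain ⟨N, g, h, hT, hN⟩ := hs
  obtain ⟨ε₀, δ₀, hNMY⟩ : ∃ (ε₀ : N⟦(-1 : ℤ)⟧ ⟶ M) (δ₀ : Y ⟶ N⟦(-1 : ℤ)⟧⟦(1 : ℤ)⟧),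
      Triangle.mk ε₀ s δ₀ ∈ distTriang T := ⟨_, _, inv_rot_of_distTriang _ hT⟩
  obtain ⟨A, B, hA, hB, a, b, c, hABN⟩ := E.cot1.tri (N⟦(-1 : ℤ)⟧)
  obtain ⟨ε, hε⟩ : ∃ ε : B ⟶ M, ε₀ = b ≫ ε := Triangle.yoneda_exact₂ _ hABN _
    (E.hom_eq_zero_of_mem_Tgt_of_isIteratedCone hA hM (a ≫ ε₀))
  obtain ⟨Z, u, v, hBMZ⟩ := distinguished_cocone_triangle ε
  obtain ⟨(w : Y ⟶ Z), hw, -⟩ := complete_distinguished_triangle_morphism _ _ hNMY hBMZ b (𝟙 M)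
    ((comp_id ε₀).trans hε)
  have hBP : E.P.P B := E.P.ext₃ _ hABN (E.incl1 hA) (E.P.shift N (-1) hN)
  refine ⟨Z, w, .cone hM ⟨hBP, hB⟩ ε u v hBMZ, ?_⟩
  rw [show s ≫ w = u from hw.trans (id_comp u)]
  exact ⟨_, _, _, rot_of_distTriang _ hBMZ, E.P.shift B 1 hBP⟩

lemma exists_isIteratedCone_of_multiplicativeClosure {M Y : T}
    (hM : IsIteratedCone E.perfectLe E.S M) {s : M ⟶ Y} (hs : E.P.W.multiplicativeClosure s) :
    ∃ (Z : T) (w : Y ⟶ Z),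
      IsIteratedCone E.perfectLe E.S Z ∧ E.P.W.multiplicativeClosure (s ≫ w) := by
  induction hs with
  | of s hs =>
    obtain ⟨Z, w, hZ, hsw⟩ := E.exists_isIteratedCone_of_W hM hs
    exact ⟨Z, w, hZ, .of _ hsw⟩
  | id M => exact ⟨M, 𝟙 M, hM, by simpa using .id M⟩
  | comp_of s₁ s₂ _ hs₂ ih =>
    obtain ⟨Z₁, w₁, hZ₁, hsw₁⟩ := ih hM
    obtain ⟨Y', f', s', hs', hfac⟩ := hs₂.exists_comm_sq w₁
    obtain ⟨Z₂, w₂, hZ₂, hsw₂⟩ := E.exists_isIteratedCone_of_W hZ₁ hs'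
    refine ⟨Z₂, f' ≫ w₂, hZ₂, ?_⟩
    rw [show (s₁ ≫ s₂) ≫ f' ≫ w₂ = (s₁ ≫ w₁) ≫ s' ≫ w₂ by simp [reassoc_of% hfac]]
    exact .comp_of _ _ hsw₁ hsw₂

end CYTriple

theorem stmt10 {D : Type u} [Category.{v} D] [Preadditive D]
    (d : ℕ) (E : CYTriple k T d)
    (Q : T ⥤ D) [Q.Additive] [Q.IsLocalization E.P.W]
    (j : ℤ) (h1 : 1 ≤ j) (h2 : j ≤ d) :
    ∀ φ : Q.obj (E.S⟦j⟧) ⟶ Q.obj E.S, φ = 0 := by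
  intro φ
  have := Functor.IsLocalization.multiplicativeClosure Q (W := E.P.W)
  obtain ⟨ψ, rfl⟩ := Localization.exists_leftFraction Q E.P.W.multiplicativeClosure φ
  obtain ⟨Z, w, hZ, hsw⟩ := E.exists_isIteratedCone_of_multiplicativeClosure .base ψ.hs
  exact ψ.map_eq_zero Q _ w hsw (E.hom_shift_S_eq_zero_of_isIteratedCone h1 h2 hZ _)
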